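/- Let (Z,ρ) = ∏_{m≥0}({0,1}, r)_m where r gives each point mass 1/2, and let the group ⊕_{m≥0}ℤ/2ℤ act on Z by coordinatewise addition. For n ≥ 0 let (Z_n, ρ_n) = ∏_{m≥n}({0,1}, r)_m and let π_n : Z → Z_n be the projection. Let Γ↷(X,μ) be a measure-preserving action of a countable group on a standard probability space and let p : X → Z be a quotient map with p(Γx) = (⊕_{m≥0}ℤ/2ℤ)·p(x) for μ-a.e. x ∈ X. Then for every sequence of functions f_n ∈ L^∞(Z_n, ρ_n) with ‖f_n‖_∞ ≤ 1 and every γ ∈ Γ, one has lim_n ‖(f_n∘π_n∘p) − (f_n∘π_n∘p)∘γ^{-1}‖_{L²(μ)} = 0. -/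

import Mathlib

open MeasureTheory Filter Set
open scoped ENNReal Topology

/-!
A.e. the orbit condition gives `p (γ⁻¹ • x) = g + p x` for a finitely supported `g`, so the
tails of `p (γ⁻¹ • x)` and `p x` beyond the support of `g` coincide and the integrand vanishes
for all large `n`. The integrands are bounded by `2`, so they also tend to `0` in `L²(μ)`.
-/

theorem tendsto_eLpNorm_zero_of_ae_tendsto_zero_of_norm_le {α E : Type*} [MeasurableSpace α]
    [NormedAddCommGroup E] {μ : Measure α} [IsFiniteMeasure μ] {p : ℝ≥0∞} (hp : 1 ≤ p)
    (hp' : p ≠ ∞) {F : ℕ → α → E} {C : ℝ} (hF : ∀ n, AEStronglyMeasurable (F n) μ)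
    (hbound : ∀ n, ∀ᵐ x ∂μ, ‖F n x‖ ≤ C)
    (hlim : ∀ᵐ x ∂μ, Tendsto (fun n => F n x) atTop (𝓝 0)) :
    Tendsto (fun n => eLpNorm (F n) p μ) atTop (𝓝 0) := by
  have hui : UnifIntegrable F p μ := by
    refine unifIntegrable_of hp hp' hF fun _ _ => ⟨C.toNNReal + 1, fun n => ?_⟩
    have hzero : {x | C.toNNReal + 1 ≤ ‖F n x‖₊}.indicator (F n) =ᵐ[μ] 0 := by
      filter_upwards [hbound n] with x hx
      refine indicator_of_notMem (fun hle => ?_) _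
      have hle' : (C.toNNReal : ℝ) + 1 ≤ ‖F n x‖ := by exact_mod_cast hle
      linarith [C.le_coe_toNNReal]
    rw [eLpNorm_congr_ae hzero, eLpNorm_zero]
    exact zero_le
  simpa using tendsto_Lp_finite_of_tendsto_ae hp hp' hF MemLp.zero hui hlim

theorem Finsupp.eventually_forall_ge_apply_eq_zero {M : Type*} [Zero M] (g : ℕ →₀ M) :
    ∀ᶠ n in atTop, ∀ m, n ≤ m → g m = 0 := by
  rw [eventually_forall_ge_atTop, ← Nat.cofinite_eq_atTop]
  simpa using g.support.eventually_cofinite_notMem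

theorem Finsupp.eventually_restrict_ge_add_eq {M : Type*} [AddZeroClass M] (g : ℕ →₀ M)
    (z : ℕ → M) :
    ∀ᶠ n in atTop, (fun m : {m : ℕ // n ≤ m} => g m + z m) = fun m : {m : ℕ // n ≤ m} => z m := by
  filter_upwards [g.eventually_forall_ge_apply_eq_zero] with n hn
  funext m
  rw [hn m m.2, zero_add]

theorem tail_functions_asymptotically_invariant_general
    {Γ X : Type*} [Group Γ] [MeasurableSpace X]
    (μ : Measure X) [IsProbabilityMeasure μ] [MulAction Γ X]
    (hμΓ : ∀ γ : Γ, MeasurePreserving (fun x => γ • x) μ μ)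
    (p : X → (ℕ → ZMod 2)) (hp : Measurable p)
    (hporb : ∀ᵐ x ∂μ, p '' (MulAction.orbit Γ x) =
      Set.range (fun g : ℕ →₀ ZMod 2 => fun m => g m + p x m))
    (f : ∀ n : ℕ, ({m : ℕ // n ≤ m} → ZMod 2) → ℂ)
    (hfmeas : ∀ n, Measurable (f n)) (hfbdd : ∀ n z, ‖f n z‖ ≤ 1) (γ : Γ) :
    Tendsto (fun n => eLpNorm
        (fun x => f n (fun m => p x m.1) - f n (fun m => p (γ⁻¹ • x) m.1)) 2 μ)
      atTop (𝓝 0) := by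
  have htail : ∀ n, Measurable fun x (m : {m : ℕ // n ≤ m}) => p x m :=
    fun n => measurable_pi_lambda _ fun m => (measurable_pi_apply m.1).comp hp
  have hγ : Measurable (γ⁻¹ • · : X → X) := (hμΓ γ⁻¹).measurable
  refine tendsto_eLpNorm_zero_of_ae_tendsto_zero_of_norm_le one_le_two ENNReal.ofNat_ne_top
    (fun n => (((hfmeas n).comp (htail n)).sub
      ((hfmeas n).comp ((htail n).comp hγ))).aestronglyMeasurable)
    (fun n => ae_of_all _ fun x => norm_sub_le_of_le (hfbdd n _) (hfbdd n _)) ?_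
  filter_upwards [hporb] with x hx
  obtain ⟨g, hg⟩ : p (γ⁻¹ • x) ∈ range fun g : ℕ →₀ ZMod 2 => fun m => g m + p x m :=
    hx ▸ mem_image_of_mem p (MulAction.mem_orbit x γ⁻¹)
  refine tendsto_const_nhds.congr' ?_
  filter_upwards [g.eventually_restrict_ge_add_eq (p x)] with n hn
  rw [← hg, hn, sub_self]

/-- **Claim 1 in the proof of Proposition 2.4.**  Let `(Z,ρ) = ∏_{m≥0}({0,1},(1/2,1/2))`
with the group `⊕_{m≥0} ℤ/2ℤ` acting by coordinatewise addition, and for `n ≥ 0` let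
`π_n : Z → Z_n = ∏_{m≥n}{0,1}` be the projection.  Let `Γ ↷ (X,μ)` be a m.p. action of
a countable group and `p : X → Z` a quotient map with `p(Γx) = (⊕ℤ/2ℤ)·p(x)` a.e.
Then for any functions `f_n ∈ L^∞(Z_n,ρ_n)` with `‖f_n‖_∞ ≤ 1` and any `γ ∈ Γ`,
`‖(f_n∘π_n∘p) − (f_n∘π_n∘p)∘γ⁻¹‖_{L²(μ)} → 0`. -/
theorem tail_functions_asymptotically_invariant
    {Γ X : Type*} [Group Γ] [Countable Γ] [MeasurableSpace X] [StandardBorelSpace X]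
    (μ : Measure X) [IsProbabilityMeasure μ] [MulAction Γ X]
    (hμΓ : ∀ γ : Γ, MeasurePreserving (fun x => γ • x) μ μ)
    (ρ : Measure (ℕ → ZMod 2)) [IsProbabilityMeasure ρ]
    (hρ : ∀ (u : Finset ℕ) (v : ℕ → ZMod 2),
      ρ {z | ∀ i ∈ u, z i = v i} = (1 / 2 : ℝ≥0∞) ^ u.card)
    (p : X → (ℕ → ZMod 2)) (hp : Measurable p) (hpm : Measure.map p μ = ρ)
    (hporb : ∀ᵐ x ∂μ, p '' (MulAction.orbit Γ x) =
      Set.range (fun g : ℕ →₀ ZMod 2 => fun m => g m + p x m))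
    (f : ∀ n : ℕ, ({m : ℕ // n ≤ m} → ZMod 2) → ℂ)
    (hfmeas : ∀ n, Measurable (f n)) (hfbdd : ∀ n z, ‖f n z‖ ≤ 1) (γ : Γ) :
    Tendsto (fun n => eLpNorm
        (fun x => f n (fun m => p x m.1) - f n (fun m => p (γ⁻¹ • x) m.1)) 2 μ)
      atTop (𝓝 0) :=
  tail_functions_asymptotically_invariant_general μ hμΓ p hp hporb f hfmeas hfbdd γ
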